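/- Suppose K = G ⋈ H is an internal Zappa–Szép product of monoids and the submonoids act on each other by bijections. Then for all g ∈ G and h ∈ H: h ◁ (h⁻¹ ▷ g) = g⁻¹ ▶ h; (h ◁ g⁻¹) ▷ g = g ◀ h⁻¹; g ◀ (g⁻¹ ▶ h) = h⁻¹ ▷ g; and (g ◀ h⁻¹) ▶ h = h ◁ g⁻¹. -/

import Mathlib

namespace ZSPaper

/-- Internal Zappa–Szép product: every element of `K` has a unique `GH`-decomposition
and a unique `HG`-decomposition. -/
structure ZS (K : Type*) [Monoid K] (G H : Submonoid K) : Prop where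
  exGH : ∀ k : K, ∃! p : G × H, (p.1 : K) * (p.2 : K) = k
  exHG : ∀ k : K, ∃! p : H × G, (p.1 : K) * (p.2 : K) = k

variable {K : Type*} [Monoid K] {G H : Submonoid K}

/-- `h ▷ g`, defined by `h * g = (h ▷ g) * (h ◁ g)`. -/
noncomputable def ZS.rtr (zs : ZS K G H) (h : H) (g : G) : G :=
  ((zs.exGH ((h : K) * (g : K))).choose).1

/-- `h ◁ g`, defined by `h * g = (h ▷ g) * (h ◁ g)`. -/
noncomputable def ZS.rtl (zs : ZS K G H) (h : H) (g : G) : H :=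
  ((zs.exGH ((h : K) * (g : K))).choose).2

/-- `g ▶ h`, defined by `g * h = (g ▶ h) * (g ◀ h)`. -/
noncomputable def ZS.ltr (zs : ZS K G H) (g : G) (h : H) : H :=
  ((zs.exHG ((g : K) * (h : K))).choose).1

/-- `g ◀ h`, defined by `g * h = (g ▶ h) * (g ◀ h)`. -/
noncomputable def ZS.ltl (zs : ZS K G H) (g : G) (h : H) : G :=
  ((zs.exHG ((g : K) * (h : K))).choose).2

/-- Right divisibility: `x` is a suffix of `y`. -/
def RDvd {M : Type*} [Monoid M] (x y : M) : Prop := ∃ u, y = u * x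

/-- An atom of a monoid. -/
def MAtom {M : Type*} [Monoid M] (a : M) : Prop :=
  a ≠ 1 ∧ ∀ u v : M, a = u * v → u = 1 ∨ v = 1

/-- An atomic monoid: generated by its atoms, with bounded lengths of atomic
decompositions. -/
def Atomic (M : Type*) [Monoid M] : Prop :=
  (∀ x : M, ∃ l : List M, (∀ a ∈ l, MAtom a) ∧ l.prod = x) ∧
  ∀ x : M, ∃ N : ℕ, ∀ l : List M, (∀ a ∈ l, MAtom a) → l.prod = x → l.length ≤ N

/-- `m` is the least common upper bound of the set `S` with respect to
left divisibility. -/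
def IsDvdLUB {M : Type*} [Monoid M] (S : Set M) (m : M) : Prop :=
  (∀ s ∈ S, s ∣ m) ∧ ∀ n, (∀ s ∈ S, s ∣ n) → m ∣ n

/-- `m` is the least common upper bound of `x` and `y` with respect to left
divisibility. -/
def IsDvdLCM {M : Type*} [Monoid M] (x y m : M) : Prop :=
  x ∣ m ∧ y ∣ m ∧ ∀ n, x ∣ n → y ∣ n → m ∣ n

/-- `d = Δ_x`, the least common upper bound of `{ y \ x : y ∈ M }`, where
`y * (y \ x) = y ∨ x`. -/
def IsDeltaOf {M : Type*} [Monoid M] (x d : M) : Prop :=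
  IsDvdLUB {t : M | ∃ y, IsDvdLCM y x (y * t)} d

/-- A Garside structure on a monoid `M` with Garside element `Δ`. -/
structure GarsideStructure (M : Type*) [Monoid M] (Δ : M) : Prop where
  mul_left_cancel : ∀ a b c : M, a * b = a * c → b = c
  mul_right_cancel : ∀ a b c : M, b * a = c * a → b = c
  atomic : Atomic M
  meet_left : ∀ x y : M, ∃ d, d ∣ x ∧ d ∣ y ∧ ∀ e, e ∣ x → e ∣ y → e ∣ d
  join_left : ∀ x y : M, ∃ m, x ∣ m ∧ y ∣ m ∧ ∀ n, x ∣ n → y ∣ n → m ∣ n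
  meet_right : ∀ x y : M, ∃ d, RDvd d x ∧ RDvd d y ∧ ∀ e, RDvd e x → RDvd e y → RDvd e d
  join_right : ∀ x y : M, ∃ m, RDvd x m ∧ RDvd y m ∧ ∀ n, RDvd x n → RDvd y n → RDvd m n
  balanced : ∀ x, x ∣ Δ ↔ RDvd x Δ
  div_finite : {x : M | x ∣ Δ}.Finite
  div_gen : Submonoid.closure {x : M | x ∣ Δ} = ⊤

end ZSPaper

open ZSPaper Function

/-!
With `g' := h ▷ g` and `h' := h ◁ g` we have `g' * h' = h * g`, so uniqueness of the
`HG`-factorisation of `g' * h'` gives `g' ▶ h' = h` and `g' ◀ h' = g`. Taking `g := h⁻¹ ▷ g`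
(so that `g' = g`), resp. `h := h ◁ g⁻¹` (so that `h' = h`), and using injectivity of `g ▶ ·`,
resp. `· ◀ h`, yields the four identities.
-/

theorem Function.Injective.eq_invFun_of_apply_eq {α β : Type*} [Nonempty α] {f : α → β}
    (hf : Injective f) {a : α} {b : β} (hab : f a = b) : a = invFun f b :=
  hab ▸ (leftInverse_invFun hf a).symm

namespace ZSPaper.ZS

variable {K : Type*} [Monoid K] {G H : Submonoid K} (zs : ZS K G H)

theorem rtr_mul_rtl (h : H) (g : G) : (zs.rtr h g : K) * zs.rtl h g = h * g :=
  (zs.exGH _).choose_spec.1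

theorem ltr_ltl_eq_of_mul_eq {g : G} {h : H} {h' : H} {g' : G}
    (e : (h' : K) * g' = g * h) : zs.ltr g h = h' ∧ zs.ltl g h = g' := by
  have := ((zs.exHG _).choose_spec.2 (h', g') e).symm
  exact ⟨congrArg Prod.fst this, congrArg Prod.snd this⟩

theorem ltr_rtr_rtl (h : H) (g : G) : zs.ltr (zs.rtr h g) (zs.rtl h g) = h :=
  (zs.ltr_ltl_eq_of_mul_eq (zs.rtr_mul_rtl h g).symm).1

theorem ltl_rtr_rtl (h : H) (g : G) : zs.ltl (zs.rtr h g) (zs.rtl h g) = g :=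
  (zs.ltr_ltl_eq_of_mul_eq (zs.rtr_mul_rtl h g).symm).2

theorem rtl_invFun_rtr {g : G} {h : H} (hr : Surjective (zs.rtr h))
    (hl : Injective (zs.ltr g)) : zs.rtl h (invFun (zs.rtr h) g) = invFun (zs.ltr g) h := by
  apply hl.eq_invFun_of_apply_eq
  simpa only [rightInverse_invFun hr g] using zs.ltr_rtr_rtl h (invFun (zs.rtr h) g)

theorem ltl_invFun_ltr {g : G} {h : H} (hr : Surjective (zs.rtr h))
    (hl : Injective (zs.ltr g)) : zs.ltl g (invFun (zs.ltr g) h) = invFun (zs.rtr h) g := by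
  rw [← zs.rtl_invFun_rtr hr hl]
  simpa only [rightInverse_invFun hr g] using zs.ltl_rtr_rtl h (invFun (zs.rtr h) g)

theorem rtr_invFun_rtl {g : G} {h : H} (hr : Surjective (fun h' : H => zs.rtl h' g))
    (hl : Injective (fun g' : G => zs.ltl g' h)) :
    zs.rtr (invFun (fun h' : H => zs.rtl h' g) h) g = invFun (fun g' : G => zs.ltl g' h) g := by
  apply hl.eq_invFun_of_apply_eq
  simpa only [rightInverse_invFun hr h] using
    zs.ltl_rtr_rtl (invFun (fun h' : H => zs.rtl h' g) h) g

theorem ltr_invFun_ltl {g : G} {h : H} (hr : Surjective (fun h' : H => zs.rtl h' g))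
    (hl : Injective (fun g' : G => zs.ltl g' h)) :
    zs.ltr (invFun (fun g' : G => zs.ltl g' h) g) h = invFun (fun h' : H => zs.rtl h' g) h := by
  rw [← zs.rtr_invFun_rtl hr hl]
  simpa only [rightInverse_invFun hr h] using
    zs.ltr_rtr_rtl (invFun (fun h' : H => zs.rtl h' g) h) g

end ZSPaper.ZS

theorem stmt10 {K : Type*} [Monoid K] {G H : Submonoid K} (zs : ZS K G H)
    (hb₁ : ∀ h : H, Function.Bijective (zs.rtr h))
    (hb₂ : ∀ h : H, Function.Bijective (fun g : G => zs.ltl g h))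
    (hb₃ : ∀ g : G, Function.Bijective (fun h : H => zs.rtl h g))
    (hb₄ : ∀ g : G, Function.Bijective (zs.ltr g)) :
    ∀ (g : G) (h : H),
      zs.rtl h (invFun (zs.rtr h) g) = invFun (zs.ltr g) h ∧
      zs.rtr (invFun (fun h' : H => zs.rtl h' g) h) g
        = invFun (fun g' : G => zs.ltl g' h) g ∧
      zs.ltl g (invFun (zs.ltr g) h) = invFun (zs.rtr h) g ∧
      zs.ltr (invFun (fun g' : G => zs.ltl g' h) g) h
        = invFun (fun h' : H => zs.rtl h' g) h := fun g h =>
  ⟨zs.rtl_invFun_rtr (hb₁ h).2 (hb₄ g).1, zs.rtr_invFun_rtl (hb₃ g).2 (hb₂ h).1,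
    zs.ltl_invFun_ltr (hb₁ h).2 (hb₄ g).1, zs.ltr_invFun_ltl (hb₃ g).2 (hb₂ h).1⟩
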